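/- arXiv:2310.13036 — 4 statements merged into one kernel-verified Lean document; each statement's English description precedes it below -/
import Mathlib

section
/- Let a₀, a₂ ∈ ℂ. Suppose that every sequence z : ℕ → ℂ with z n ≠ 0 for all n that satisfies the recursion z_{n+2} = (a₂·z_n + z_{n+1} + a₀)/z_n for all n is periodic with period 6 (i.e. z_{n+6} = z_n for all n). Then a₀ = 0 and a₂ = 0, i.e. the recursion is z_{n+2} = z_{n+1}/z_n. -/
open Polynomial

/-- The orbit of the recursion, with Lean's (total) division. -/
noncomputable def orbZ (a₀ a₂ x y : ℂ) : ℕ → ℂ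
  | 0 => x
  | 1 => y
  | n + 2 => (a₂ * orbZ a₀ a₂ x y n + orbZ a₀ a₂ x y (n + 1) + a₀) / orbZ a₀ a₂ x y n

/-- Numerator/denominator polynomials (in the second initial value) for the orbit. -/
noncomputable def pqZ (a₀ a₂ x : ℂ) : ℕ → Polynomial ℂ × Polynomial ℂ
  | 0 => (C x, 1)
  | 1 => (X, 1)
  | n + 2 =>
      (C a₂ * (pqZ a₀ a₂ x n).1 * (pqZ a₀ a₂ x (n + 1)).2 +
         (pqZ a₀ a₂ x (n + 1)).1 * (pqZ a₀ a₂ x n).2 +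
         C a₀ * (pqZ a₀ a₂ x n).2 * (pqZ a₀ a₂ x (n + 1)).2,
       (pqZ a₀ a₂ x n).1 * (pqZ a₀ a₂ x (n + 1)).2)

lemma orbZ_step (a₀ a₂ x y : ℂ) (n : ℕ) :
    orbZ a₀ a₂ x y (n + 2) =
      (a₂ * orbZ a₀ a₂ x y n + orbZ a₀ a₂ x y (n + 1) + a₀) / orbZ a₀ a₂ x y n := rfl

lemma pqZ_fst (a₀ a₂ x : ℂ) (n : ℕ) :
    (pqZ a₀ a₂ x (n + 2)).1 =
      C a₂ * (pqZ a₀ a₂ x n).1 * (pqZ a₀ a₂ x (n + 1)).2 +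
        (pqZ a₀ a₂ x (n + 1)).1 * (pqZ a₀ a₂ x n).2 +
        C a₀ * (pqZ a₀ a₂ x n).2 * (pqZ a₀ a₂ x (n + 1)).2 := rfl

lemma pqZ_snd (a₀ a₂ x : ℂ) (n : ℕ) :
    (pqZ a₀ a₂ x (n + 2)).2 = (pqZ a₀ a₂ x n).1 * (pqZ a₀ a₂ x (n + 1)).2 := rfl

lemma twoStep {P : ℕ → Prop} (h0 : P 0) (h1 : P 1)
    (hs : ∀ n, P n → P (n + 1) → P (n + 2)) : ∀ n, P n := by
  have key : ∀ n, P n ∧ P (n + 1) := by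
    intro n
    induction n with
    | zero => exact ⟨h0, h1⟩
    | succ n ih => exact ⟨ih.2, hs n ih.1 ih.2⟩
  exact fun n => (key n).1

lemma compl_infinite {S : Set ℂ} (hS : S.Countable) : Sᶜ.Infinite := by
  have hu : Uncountable ℂ := Complex.ofReal_injective.uncountable
  by_contra hfin
  rw [Set.not_infinite] at hfin
  have huniv : (Set.univ : Set ℂ).Countable := by
    rw [← Set.union_compl_self S]
    exact hS.union hfin.countable
  exact (Set.not_countable_univ_iff.mpr hu) huniv

lemma master (a₀ a₂ x : ℂ) (o : ℕ → ℂ) (ho0 : o 0 = x) (hnz : ∀ n, o n ≠ 0)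
    (hrec : ∀ n, o (n + 2) * o n = a₂ * o n + o (n + 1) + a₀) :
    ∃ S : Set ℂ, S.Countable ∧ ∀ y ∉ S,
      (∀ n, orbZ a₀ a₂ x y n ≠ 0) ∧
      ∀ n, eval y (pqZ a₀ a₂ x n).2 ≠ 0 ∧
        eval y (pqZ a₀ a₂ x n).1 = orbZ a₀ a₂ x y n * eval y (pqZ a₀ a₂ x n).2 := by
  have key : ∀ n, eval (o 1) (pqZ a₀ a₂ x n).2 ≠ 0 ∧
      eval (o 1) (pqZ a₀ a₂ x n).1 = o n * eval (o 1) (pqZ a₀ a₂ x n).2 := by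
    apply twoStep
    · refine ⟨by simp [pqZ], ?_⟩
      simp [pqZ, ho0]
    · refine ⟨by simp [pqZ], ?_⟩
      simp [pqZ]
    · rintro n ⟨hq1, hp1⟩ ⟨hq2, hp2⟩
      constructor
      · rw [pqZ_snd, eval_mul, hp1]
        exact mul_ne_zero (mul_ne_zero (hnz n) hq1) hq2
      · rw [pqZ_fst, pqZ_snd]
        simp only [eval_add, eval_mul, eval_C]
        rw [hp1, hp2]
        linear_combination
          (-(eval (o 1) (pqZ a₀ a₂ x n).2 * eval (o 1) (pqZ a₀ a₂ x (n + 1)).2)) * hrec n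
  have hPne : ∀ n, (pqZ a₀ a₂ x n).1 ≠ 0 := by
    intro n hzero
    have h1 := (key n).2
    rw [hzero, eval_zero] at h1
    exact mul_ne_zero (hnz n) (key n).1 h1.symm
  refine ⟨⋃ n, {y | eval y (pqZ a₀ a₂ x n).1 = 0}, ?_, ?_⟩
  · exact Set.countable_iUnion fun n =>
      (Polynomial.finite_setOf_isRoot (hPne n)).countable
  · intro y hy
    have hyP : ∀ n, eval y (pqZ a₀ a₂ x n).1 ≠ 0 := by
      intro n hn
      exact hy (Set.mem_iUnion.mpr ⟨n, hn⟩)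
    have main : ∀ n, eval y (pqZ a₀ a₂ x n).2 ≠ 0 ∧
        eval y (pqZ a₀ a₂ x n).1 = orbZ a₀ a₂ x y n * eval y (pqZ a₀ a₂ x n).2 := by
      apply twoStep
      · refine ⟨by simp [pqZ], ?_⟩
        show eval y (pqZ a₀ a₂ x 0).1 = x * eval y (pqZ a₀ a₂ x 0).2
        simp [pqZ]
      · refine ⟨by simp [pqZ], ?_⟩
        show eval y (pqZ a₀ a₂ x 1).1 = y * eval y (pqZ a₀ a₂ x 1).2
        simp [pqZ]
      · rintro n ⟨hq1, hp1⟩ ⟨hq2, hp2⟩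
        have horbn : orbZ a₀ a₂ x y n ≠ 0 := by
          intro h0
          exact hyP n (by rw [hp1, h0, zero_mul])
        constructor
        · rw [pqZ_snd, eval_mul]
          exact mul_ne_zero (hyP n) hq2
        · rw [pqZ_fst, pqZ_snd]
          simp only [eval_add, eval_mul, eval_C]
          rw [hp1, hp2, orbZ_step]
          field_simp
    refine ⟨?_, main⟩
    intro n h0
    exact hyP n (by rw [(main n).2, h0, zero_mul])

lemma anchor (a₀ a₂ : ℂ) : ∃ w₀ w₁ : ℂ, w₀ ≠ 0 ∧ w₁ ≠ 0 ∧
    w₀ ^ 2 = a₂ * w₀ + w₁ + a₀ ∧ w₁ ^ 2 = a₂ * w₁ + w₀ + a₀ := by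
  by_cases h0 : a₀ = 0
  · by_cases h2 : a₂ = -1
    · refine ⟨-1 + Complex.I, -1 - Complex.I, ?_, ?_, ?_, ?_⟩
      · intro hh
        have := congrArg Complex.im hh
        simp at this
      · intro hh
        have := congrArg Complex.im hh
        simp at this
      · rw [h0, h2]
        linear_combination Complex.I_sq
      · rw [h0, h2]
        linear_combination Complex.I_sq
    · refine ⟨a₂ + 1, a₂ + 1, ?_, ?_, ?_, ?_⟩
      · intro hh; exact h2 (by linear_combination hh)
      · intro hh; exact h2 (by linear_combination hh)
      · rw [h0]; ring
      · rw [h0]; ring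
  · obtain ⟨s, hs⟩ := IsAlgClosed.exists_pow_nat_eq ((a₂ + 1) ^ 2 + 4 * a₀) (n := 2) (by norm_num)
    have hw : ((a₂ + 1 + s) / 2) ^ 2 = (a₂ + 1) * ((a₂ + 1 + s) / 2) + a₀ := by
      linear_combination hs / 4
    have hwne : (a₂ + 1 + s) / 2 ≠ 0 := by
      intro hh
      rw [hh] at hw
      simp at hw
      exact h0 hw.symm
    exact ⟨_, _, hwne, hwne, by linear_combination hw, by linear_combination hw⟩

set_option maxRecDepth 100000 in
set_option maxHeartbeats 2000000 in
lemma pq_expand (a₀ a₂ x : ℂ) :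
    (pqZ a₀ a₂ x 6).1 - C x * (pqZ a₀ a₂ x 6).2 =
      C (-a₂ ^ 3*x ^ 6 + a₂ ^ 4*x ^ 5 - 3*a₀*a₂ ^ 2*x ^ 5 - 2*a₀*a₂ ^ 2*x ^ 6 + 3*a₀*a₂ ^ 3*x ^ 4 + 2*a₀*a₂ ^ 3*x ^ 5 - 3*a₀ ^ 2*a₂*x ^ 4 - 4*a₀ ^ 2*a₂*x ^ 5 - a₀ ^ 2*a₂*x ^ 6 + 3*a₀ ^ 2*a₂ ^ 2*x ^ 3 + 4*a₀ ^ 2*a₂ ^ 2*x ^ 4 + a₀ ^ 2*a₂ ^ 2*x ^ 5 - a₀ ^ 3*x ^ 3 - 2*a₀ ^ 3*x ^ 4 - a₀ ^ 3*x ^ 5 + a₀ ^ 3*a₂*x ^ 2 + 2*a₀ ^ 3*a₂*x ^ 3 + a₀ ^ 3*a₂*x ^ 4) * (X : Polynomial ℂ) ^ 1 +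
      C (-2*a₂ ^ 2*x ^ 5 + 3*a₂ ^ 3*x ^ 4 - 2*a₂ ^ 3*x ^ 6 + 3*a₂ ^ 4*x ^ 5 - a₂ ^ 4*x ^ 6 + a₂ ^ 5*x ^ 5 - 4*a₀*a₂*x ^ 4 - 3*a₀*a₂*x ^ 5 + 6*a₀*a₂ ^ 2*x ^ 3 + 4*a₀*a₂ ^ 2*x ^ 4 - 4*a₀*a₂ ^ 2*x ^ 5 - 3*a₀*a₂ ^ 2*x ^ 6 + 7*a₀*a₂ ^ 3*x ^ 4 + 2*a₀*a₂ ^ 3*x ^ 5 - a₀*a₂ ^ 3*x ^ 6 + 3*a₀*a₂ ^ 4*x ^ 4 + a₀*a₂ ^ 4*x ^ 5 - 2*a₀ ^ 2*x ^ 3 - 3*a₀ ^ 2*x ^ 4 - a₀ ^ 2*x ^ 5 + 3*a₀ ^ 2*a₂*x ^ 2 + 4*a₀ ^ 2*a₂*x ^ 3 - a₀ ^ 2*a₂*x ^ 4 - 4*a₀ ^ 2*a₂*x ^ 5 - a₀ ^ 2*a₂*x ^ 6 + 5*a₀ ^ 2*a₂ ^ 2*x ^ 3 + 6*a₀ ^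 2*a₂ ^ 2*x ^ 4 + 3*a₀ ^ 2*a₂ ^ 3*x ^ 3 + 2*a₀ ^ 2*a₂ ^ 3*x ^ 4 - a₀ ^ 3*x ^ 4 - a₀ ^ 3*x ^ 5 + a₀ ^ 3*a₂*x ^ 2 + 4*a₀ ^ 3*a₂*x ^ 3 + 2*a₀ ^ 3*a₂*x ^ 4 + a₀ ^ 3*a₂ ^ 2*x ^ 2 + a₀ ^ 3*a₂ ^ 2*x ^ 3 + a₀ ^ 4*x ^ 2 + a₀ ^ 4*x ^ 3) * (X : Polynomial ℂ) ^ 2 +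
      C (-a₂*x ^ 4 + 3*a₂ ^ 2*x ^ 3 - 3*a₂ ^ 2*x ^ 5 + 7*a₂ ^ 3*x ^ 4 - 2*a₂ ^ 3*x ^ 5 - a₂ ^ 3*x ^ 6 + 3*a₂ ^ 4*x ^ 4 + 2*a₂ ^ 4*x ^ 5 - a₂ ^ 4*x ^ 6 + a₂ ^ 5*x ^ 5 - a₀*x ^ 3 - a₀*x ^ 4 + 3*a₀*a₂*x ^ 2 + 2*a₀*a₂*x ^ 3 - 3*a₀*a₂*x ^ 4 - 3*a₀*a₂*x ^ 5 + 10*a₀*a₂ ^ 2*x ^ 3 + 5*a₀*a₂ ^ 2*x ^ 4 - 2*a₀*a₂ ^ 2*x ^ 5 - a₀*a₂ ^ 2*x ^ 6 + 6*a₀*a₂ ^ 3*x ^ 3 + 5*a₀*a₂ ^ 3*x ^ 4 + 2*a₀*a₂ ^ 4*x ^ 4 - a₀ ^ 2*x ^ 4 - a₀ ^ 2*x ^ 5 + 3*a₀ ^ 2*a₂*x ^ 2 + 8*a₀ ^ 2*a₂*x ^ 3 + 3*a₀ ^ 2*a₂*x ^ 4 - a₀ ^ 2*a₂*x ^ 5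 + 3*a₀ ^ 2*a₂ ^ 2*x ^ 2 + 3*a₀ ^ 2*a₂ ^ 2*x ^ 3 + 2*a₀ ^ 2*a₂ ^ 2*x ^ 4 + a₀ ^ 2*a₂ ^ 3*x ^ 3 + 3*a₀ ^ 3*x ^ 2 + 3*a₀ ^ 3*x ^ 3 + a₀ ^ 3*a₂*x ^ 3) * (X : Polynomial ℂ) ^ 3 +
      C (a₂*x ^ 2 - a₂*x ^ 4 + 5*a₂ ^ 2*x ^ 3 - a₂ ^ 2*x ^ 4 - a₂ ^ 2*x ^ 5 + 3*a₂ ^ 3*x ^ 3 + 3*a₂ ^ 3*x ^ 4 - 2*a₂ ^ 3*x ^ 5 + 2*a₂ ^ 4*x ^ 4 + 3*a₀*a₂*x ^ 2 + 4*a₀*a₂*x ^ 3 + a₀*a₂*x ^ 4 - a₀*a₂*x ^ 5 + 3*a₀*a₂ ^ 2*x ^ 2 + 3*a₀*a₂ ^ 2*x ^ 3 + a₀*a₂ ^ 2*x ^ 4 + 2*a₀*a₂ ^ 3*x ^ 3 + 3*a₀ ^ 2*x ^ 2 + 3*a₀ ^ 2*x ^ 3 + 2*a₀ ^ 2*a₂*x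 ^ 3) * (X : Polynomial ℂ) ^ 4 +
      C (a₂*x ^ 2 + a₂ ^ 2*x ^ 2 + a₂ ^ 2*x ^ 3 - a₂ ^ 2*x ^ 4 + a₂ ^ 3*x ^ 3 + a₀*x ^ 2 + a₀*x ^ 3 + a₀*a₂*x ^ 3) * (X : Polynomial ℂ) ^ 5 := by
  have e0 : pqZ a₀ a₂ x 0 = (C x, 1) := rfl
  have e1 : pqZ a₀ a₂ x 1 = (X, 1) := rfl
  have e2 : pqZ a₀ a₂ x 2 = (C a₂ * (pqZ a₀ a₂ x 0).1 * (pqZ a₀ a₂ x 1).2 +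
      (pqZ a₀ a₂ x 1).1 * (pqZ a₀ a₂ x 0).2 +
      C a₀ * (pqZ a₀ a₂ x 0).2 * (pqZ a₀ a₂ x 1).2,
      (pqZ a₀ a₂ x 0).1 * (pqZ a₀ a₂ x 1).2) := rfl
  have e3 : pqZ a₀ a₂ x 3 = (C a₂ * (pqZ a₀ a₂ x 1).1 * (pqZ a₀ a₂ x 2).2 +
      (pqZ a₀ a₂ x 2).1 * (pqZ a₀ a₂ x 1).2 +
      C a₀ * (pqZ a₀ a₂ x 1).2 * (pqZ a₀ a₂ x 2).2,
      (pqZ a₀ a₂ x 1).1 * (pqZ a₀ a₂ x 2).2) := rfl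
  have e4 : pqZ a₀ a₂ x 4 = (C a₂ * (pqZ a₀ a₂ x 2).1 * (pqZ a₀ a₂ x 3).2 +
      (pqZ a₀ a₂ x 3).1 * (pqZ a₀ a₂ x 2).2 +
      C a₀ * (pqZ a₀ a₂ x 2).2 * (pqZ a₀ a₂ x 3).2,
      (pqZ a₀ a₂ x 2).1 * (pqZ a₀ a₂ x 3).2) := rfl
  have e5 : pqZ a₀ a₂ x 5 = (C a₂ * (pqZ a₀ a₂ x 3).1 * (pqZ a₀ a₂ x 4).2 +
      (pqZ a₀ a₂ x 4).1 * (pqZ a₀ a₂ x 3).2 +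
      C a₀ * (pqZ a₀ a₂ x 3).2 * (pqZ a₀ a₂ x 4).2,
      (pqZ a₀ a₂ x 3).1 * (pqZ a₀ a₂ x 4).2) := rfl
  have e6 : pqZ a₀ a₂ x 6 = (C a₂ * (pqZ a₀ a₂ x 4).1 * (pqZ a₀ a₂ x 5).2 +
      (pqZ a₀ a₂ x 5).1 * (pqZ a₀ a₂ x 4).2 +
      C a₀ * (pqZ a₀ a₂ x 4).2 * (pqZ a₀ a₂ x 5).2,
      (pqZ a₀ a₂ x 4).1 * (pqZ a₀ a₂ x 5).2) := rfl
  rw [e6, e5, e4, e3, e2, e1, e0]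
  dsimp only
  simp only [map_add, map_sub, map_mul, map_pow, map_neg, map_ofNat]
  ring

theorem period_six_recursion_classification (a₀ a₂ : ℂ)
    (h : ∀ z : ℕ → ℂ, (∀ n, z n ≠ 0) →
      (∀ n, z (n + 2) = (a₂ * z n + z (n + 1) + a₀) / z n) →
      ∀ n, z (n + 6) = z n) :
    a₀ = 0 ∧ a₂ = 0 := by
  obtain ⟨w₀, w₁, hw₀, hw₁, e₀, e₁⟩ := anchor a₀ a₂
  set o : ℕ → ℂ := fun n => if n % 2 = 0 then w₀ else w₁ with ho_def
  have ho0 : o 0 = w₀ := by norm_num [ho_def]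
  have honz : ∀ n, o n ≠ 0 := by
    intro n
    by_cases hn : n % 2 = 0 <;> simp [ho_def, hn, hw₀, hw₁]
  have horec : ∀ n, o (n + 2) * o n = a₂ * o n + o (n + 1) + a₀ := by
    intro n
    by_cases hn : n % 2 = 0
    · have h2 : (n + 2) % 2 = 0 := by omega
      have h1 : ¬ (n + 1) % 2 = 0 := by omega
      simp only [ho_def, if_pos h2, if_pos hn, if_neg h1]
      linear_combination e₀
    · have h2 : ¬ (n + 2) % 2 = 0 := by omega
      have h1 : (n + 1) % 2 = 0 := by omega
      simp only [ho_def, if_neg h2, if_neg hn, if_pos h1]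
      linear_combination e₁
  obtain ⟨S₀, hS₀, good₀⟩ := master a₀ a₂ w₀ o ho0 honz horec
  have hc5 : ∀ p ∉ S₀,
      a₂*p ^ 2 + a₂ ^ 2*p ^ 2 + a₂ ^ 2*p ^ 3 - a₂ ^ 2*p ^ 4 + a₂ ^ 3*p ^ 3 +
        a₀*p ^ 2 + a₀*p ^ 3 + a₀*a₂*p ^ 3 = 0 := by
    intro p hp
    obtain ⟨hznz, -⟩ := good₀ p hp
    have hzrec : ∀ n, orbZ a₀ a₂ w₀ p (n + 2) * orbZ a₀ a₂ w₀ p n =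
        a₂ * orbZ a₀ a₂ w₀ p n + orbZ a₀ a₂ w₀ p (n + 1) + a₀ := by
      intro n
      rw [orbZ_step]
      exact div_mul_cancel₀ _ (hznz n)
    obtain ⟨S₁, hS₁, good₁⟩ := master a₀ a₂ p (fun n => orbZ a₀ a₂ w₀ p (n + 1)) rfl
      (fun n => hznz (n + 1)) (fun n => hzrec (n + 1))
    have hF : (pqZ a₀ a₂ p 6).1 - C p * (pqZ a₀ a₂ p 6).2 = 0 := by
      apply Polynomial.eq_zero_of_infinite_isRoot
      apply (compl_infinite hS₁).mono
      intro v hv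
      obtain ⟨hvz, hvcor⟩ := good₁ v hv
      have hper : orbZ a₀ a₂ p v 6 = orbZ a₀ a₂ p v 0 :=
        h (orbZ a₀ a₂ p v) hvz (fun n => orbZ_step a₀ a₂ p v n) 0
      have h6 := (hvcor 6).2
      show IsRoot _ v
      rw [IsRoot.def, eval_sub, eval_mul, eval_C, h6, hper]
      show p * _ - p * _ = 0
      ring
    have hexp := pq_expand a₀ a₂ p
    rw [hF] at hexp
    have h5 := congrArg (fun q : Polynomial ℂ => q.coeff 5) hexp
    simp only [coeff_zero, coeff_add, coeff_C_mul, coeff_X_pow] at h5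
    norm_num at h5
    linear_combination -h5
  have hH : (C (a₀ + a₂ + a₂ ^ 2) * X ^ 2 +
      C (a₀ + a₀*a₂ + a₂ ^ 2 + a₂ ^ 3) * X ^ 3 +
      C (-a₂ ^ 2) * X ^ 4 : Polynomial ℂ) = 0 := by
    apply Polynomial.eq_zero_of_infinite_isRoot
    apply (compl_infinite hS₀).mono
    intro p hp
    show IsRoot _ p
    rw [IsRoot.def]
    simp only [eval_add, eval_mul, eval_C, eval_pow, eval_X]
    linear_combination hc5 p hp
  have ha₂ : a₂ = 0 := by
    have h4 := congrArg (fun q : Polynomial ℂ => q.coeff 4) hH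
    simp only [coeff_zero, coeff_add, coeff_C_mul, coeff_X_pow] at h4
    norm_num at h4
    first
      | exact h4
      | exact pow_eq_zero_iff two_ne_zero |>.mp (by linear_combination -h4)
      | exact pow_eq_zero_iff two_ne_zero |>.mp (by linear_combination h4)
  have ha₀ : a₀ = 0 := by
    have h2 := congrArg (fun q : Polynomial ℂ => q.coeff 2) hH
    simp only [coeff_zero, coeff_add, coeff_C_mul, coeff_X_pow] at h2
    norm_num at h2
    rw [ha₂] at h2
    simpa using h2
  exact ⟨ha₀, ha₂⟩
end

section
/- There do not exist a₀, a₃ ∈ ℂ such that every sequence z : ℕ → ℂ with z n ≠ 0 for all n that satisfies the third-order recursion z_{n+3} = (a₃·z_n + z_{n+2} + a₀)/z_n for all n is periodic with period 12 (i.e. z_{n+12} = z_n for all n). -/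
/-!
Suppose every nowhere-vanishing solution of `z (n + 3) * z n = a * z n + z (n + 2) + b` is
12-periodic. A first-order deformation of a solution, i.e. a solution over the dual numbers
`ℂ[ε]`, is then 12-periodic as well: otherwise the solution with initial values
`w i.fst + w i.snd * t` is, for all but countably many `t`, nowhere zero and not 12-periodic.
So every solution `e` of the linearised recursion along a nowhere-vanishing solution is
12-periodic.

If the recursion has a fixed point `c ≠ 0`, the linearisation has constant coefficients and
the solutions `r ^ n` for the roots `r` of `c r³ = r² + (a - c)`; these cannot all be
12th roots of unity: three numbers of modulus one whose pairwise products sum to zero also sum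
to zero, whereas here the sum of the roots is `1 / c`.
The only recursion without such a fixed point is `a = -1, b = 0`; there we linearise along a
3-cycle, and the Casoratian of three independent tangent solutions gets multiplied by
`∏ (a - p (n + 3)) / p n = (p 0 * p 1 * p 2)⁻⁴` over 12 steps, which is not `1`.
-/

open Polynomial TrivSqZeroExt DualNumber

def IsType2Solution {R : Type*} [CommRing R] (a b : R) (w : ℕ → R) : Prop :=
  ∀ n, w (n + 3) * w n = a * w n + w (n + 2) + b

def IsType2Tangent {R : Type*} [CommRing R] (a : R) (p e : ℕ → R) : Prop :=
  ∀ n, p n * e (n + 3) = (a - p (n + 3)) * e n + e (n + 2)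

def AllSolutionsPeriodic {K : Type*} [Field K] (a b : K) (k : ℕ) : Prop :=
  ∀ z : ℕ → K, (∀ n, z n ≠ 0) → IsType2Solution a b z → ∀ n, z (n + k) = z n

section CommRing

variable {R S : Type*} [CommRing R] [CommRing S]

theorem IsType2Solution.shift {a b : R} {w : ℕ → R} (hw : IsType2Solution a b w) (m : ℕ) :
    IsType2Solution a b fun n => w (n + m) := fun n => by
  simpa only [Nat.add_right_comm _ m] using hw (n + m)

theorem IsType2Solution.of_zmod {a b : R} {m : ℕ} {v : ZMod m → R}
    (hv : ∀ i, v (i + 3) * v i = a * v i + v (i + 2) + b) :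
    IsType2Solution a b fun n => v (n : ZMod m) := fun n => by
  simpa using hv (n : ZMod m)

theorem IsType2Solution.dualNumber {a b : R} {p e : ℕ → R} (hp : IsType2Solution a b p)
    (he : IsType2Tangent a p e) :
    IsType2Solution (inl a) (inl b) fun n => inl (p n) + inr (e n) := fun n => by
  ext
  · simpa using hp n
  · simp only [DualNumber.snd_mul, fst_add, snd_add, fst_inl, snd_inl, fst_inr, snd_inr]
    linear_combination he n

/-- Numerator and denominator of the solution with initial values `x 0, x 1, x 2`, computed
without division. -/
def type2NumDen (a b : R) (x : Fin 3 → R) : ℕ → R × R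
  | 0 => (x 0, 1)
  | 1 => (x 1, 1)
  | 2 => (x 2, 1)
  | n + 3 =>
    let u := type2NumDen a b x n
    let v := type2NumDen a b x (n + 2)
    (v.1 * u.2 + a * u.1 * v.2 + b * u.2 * v.2, v.2 * u.1)

theorem map_type2NumDen (f : R →+* S) (a b : R) (x : Fin 3 → R) (n : ℕ) :
    Prod.map f f (type2NumDen a b x n) = type2NumDen (f a) (f b) (f ∘ x) n := by
  induction n using Nat.strong_induction_on with
  | _ n ih =>
    match n, ih with
    | 0, _ | 1, _ | 2, _ => simp [type2NumDen]
    | n + 3, ih =>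
      have h0 := ih n (by omega)
      have h2 := ih (n + 2) (by omega)
      simp only [type2NumDen, Prod.map, Prod.ext_iff] at h0 h2 ⊢
      simp only [map_add, map_mul, h0.1, h0.2, h2.1, h2.2, and_self]

theorem type2NumDen_fst_eq {a b : R} {w : ℕ → R} (hw : IsType2Solution a b w)
    (hu : ∀ n, IsUnit (w n)) (n : ℕ) :
    (type2NumDen a b (fun i => w i) n).1 = w n * (type2NumDen a b (fun i => w i) n).2 ∧
      IsUnit (type2NumDen a b (fun i => w i) n).2 := by
  induction n using Nat.strong_induction_on with
  | _ n ih =>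
    match n, ih with
    | 0, _ | 1, _ | 2, _ => simp [type2NumDen]
    | n + 3, ih =>
      obtain ⟨h0, u0⟩ := ih n (by omega)
      obtain ⟨h2, u2⟩ := ih (n + 2) (by omega)
      simp only [type2NumDen]
      refine ⟨?_, u2.mul (h0 ▸ (hu n).mul u0)⟩
      rw [h0, h2]
      linear_combination -(type2NumDen a b (fun i => w i) n).2 *
        (type2NumDen a b (fun i => w i) (n + 2)).2 * hw n

end CommRing

theorem isType2Solution_div_type2NumDen {K : Type*} [Field K] {a b : K} {x : Fin 3 → K}
    (h : ∀ n, (type2NumDen a b x n).1 ≠ 0 ∧ (type2NumDen a b x n).2 ≠ 0) :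
    IsType2Solution a b fun n => (type2NumDen a b x n).1 / (type2NumDen a b x n).2 := by
  intro n
  obtain ⟨p0, q0⟩ := h n
  obtain ⟨p2, q2⟩ := h (n + 2)
  simp only [type2NumDen]
  field_simp
  ring

theorem Polynomial.exists_forall_eval_ne_zero {K : Type*} [Field K] [Uncountable K]
    (f : ℕ → K[X]) (hf : ∀ n, f n ≠ 0) : ∃ t, ∀ n, (f n).eval t ≠ 0 := by
  have hroots : (⋃ n, {t | (f n).IsRoot t}).Countable :=
    Set.countable_iUnion fun n => (finite_setOfPred_isRoot (hf n)).countable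
  obtain ⟨t, ht⟩ := (Set.ne_univ_iff_exists_notMem _).1 fun h =>
    not_countable (α := K) (Set.countable_univ_iff.1 (h ▸ hroots))
  exact ⟨t, by simpa using ht⟩

instance Complex.instUncountable : Uncountable ℂ :=
  ⟨fun h => not_countable_complex (Set.countable_univ_iff.2 h)⟩

section Casoratian

variable {R : Type*} [CommRing R]

def casoratian (u v w : ℕ → R) (n : ℕ) : R :=
  !![u n, v n, w n; u (n + 1), v (n + 1), w (n + 1); u (n + 2), v (n + 2), w (n + 2)].det

variable {c α β γ u v w : ℕ → R}

theorem casoratian_succ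
    (hu : ∀ n, c n * u (n + 3) = α n * u n + β n * u (n + 1) + γ n * u (n + 2))
    (hv : ∀ n, c n * v (n + 3) = α n * v n + β n * v (n + 1) + γ n * v (n + 2))
    (hw : ∀ n, c n * w (n + 3) = α n * w n + β n * w (n + 1) + γ n * w (n + 2)) (n : ℕ) :
    c n * casoratian u v w (n + 1) = α n * casoratian u v w n := by
  simp only [casoratian, add_assoc, Nat.reduceAdd, Matrix.det_fin_three, Fin.isValue,
    Matrix.of_apply, Matrix.cons_val', Matrix.cons_val_zero, Matrix.cons_val_fin_one,
    Matrix.cons_val_one, Matrix.cons_val]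
  linear_combination (v (n + 1) * w (n + 2) - w (n + 1) * v (n + 2)) * hu n
    - (u (n + 1) * w (n + 2) - w (n + 1) * u (n + 2)) * hv n
    + (u (n + 1) * v (n + 2) - v (n + 1) * u (n + 2)) * hw n

theorem prod_mul_casoratian
    (hu : ∀ n, c n * u (n + 3) = α n * u n + β n * u (n + 1) + γ n * u (n + 2))
    (hv : ∀ n, c n * v (n + 3) = α n * v n + β n * v (n + 1) + γ n * v (n + 2))
    (hw : ∀ n, c n * w (n + 3) = α n * w n + β n * w (n + 1) + γ n * w (n + 2)) (n : ℕ) :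
    (∏ i ∈ Finset.range n, c i) * casoratian u v w n =
      (∏ i ∈ Finset.range n, α i) * casoratian u v w 0 := by
  induction n with
  | zero => simp
  | succ n ih =>
    rw [Finset.prod_range_succ, Finset.prod_range_succ]
    linear_combination (∏ i ∈ Finset.range n, c i) * casoratian_succ hu hv hw n + α n * ih

theorem casoratian_add_of_periodic {k : ℕ}
    (hu : ∀ n, u (n + k) = u n) (hv : ∀ n, v (n + k) = v n) (hw : ∀ n, w (n + k) = w n)
    (n : ℕ) : casoratian u v w (n + k) = casoratian u v w n := by
  simp only [casoratian, Nat.add_right_comm n k, hu, hv, hw]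

end Casoratian

def tangentSeq {K : Type*} [Field K] (a : K) (p : ℕ → K) (e : Fin 3 → K) : ℕ → K
  | 0 => e 0
  | 1 => e 1
  | 2 => e 2
  | n + 3 => ((a - p (n + 3)) * tangentSeq a p e n + tangentSeq a p e (n + 2)) / p n

theorem isType2Tangent_tangentSeq {K : Type*} [Field K] {a : K} {p : ℕ → K} (hp : ∀ n, p n ≠ 0)
    (e : Fin 3 → K) : IsType2Tangent a p (tangentSeq a p e) := fun n => by
  rw [tangentSeq, mul_div_cancel₀ _ (hp n)]

section Deformation

variable {K : Type*} [Field K] [Uncountable K]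

theorem exists_isType2Solution_ne_of_polynomial {a b : K} {x : Fin 3 → K[X]} {k : ℕ}
    (hnd : ∀ n, (type2NumDen (C a) (C b) x n).1 ≠ 0 ∧ (type2NumDen (C a) (C b) x n).2 ≠ 0)
    (hD : (type2NumDen (C a) (C b) x k).1 * (type2NumDen (C a) (C b) x 0).2 -
      (type2NumDen (C a) (C b) x 0).1 * (type2NumDen (C a) (C b) x k).2 ≠ 0) :
    ∃ z : ℕ → K, (∀ n, z n ≠ 0) ∧ IsType2Solution a b z ∧ z k ≠ z 0 := by
  set ND := type2NumDen (C a) (C b) x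
  obtain ⟨t, ht⟩ := exists_forall_eval_ne_zero (fun n => (ND n).1 * (ND n).2 *
    ((ND k).1 * (ND 0).2 - (ND 0).1 * (ND k).2))
    fun n => mul_ne_zero (mul_ne_zero (hnd n).1 (hnd n).2) hD
  simp only [eval_mul, mul_ne_zero_iff] at ht
  have hψ (n : ℕ) : type2NumDen a b (eval t ∘ x) n = ((ND n).1.eval t, (ND n).2.eval t) := by
    have := map_type2NumDen (evalRingHom t) (C a) (C b) x n
    simp only [coe_evalRingHom, eval_C] at this
    exact this.symm
  refine ⟨fun n => (ND n).1.eval t / (ND n).2.eval t,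
    fun n => div_ne_zero (ht n).1.1 (ht n).1.2, ?_, fun h => (ht 0).2 ?_⟩
  · simpa [hψ] using isType2Solution_div_type2NumDen (a := a) (b := b) (x := eval t ∘ x)
      fun n => by simpa [hψ] using (ht n).1
  · rw [div_eq_div_iff (ht k).1.2 (ht 0).1.2] at h
    simp only [eval_sub, eval_mul]
    linear_combination h

theorem AllSolutionsPeriodic.dualNumber_apply_zero {a b : K} {k : ℕ}
    (H : AllSolutionsPeriodic a b k) {w : ℕ → K[ε]}
    (hw : IsType2Solution (inl a) (inl b) w) (hu : ∀ n, (w n).fst ≠ 0) : w k = w 0 := by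
  by_contra hk
  set x : Fin 3 → K[X] := fun i => C (w i).fst + C (w i).snd * X
  set ND := type2NumDen (C a) (C b) x
  set φ : K[X] →+* K[ε] := (aeval (ε : K[ε])).toRingHom
  have hφC (r : K) : φ (C r) = inl r := by simp [φ, algebraMap_eq_inl]
  have hφx : φ ∘ x = fun i : Fin 3 => w i := funext fun i => by
    simp only [φ, x, Function.comp_apply, AlgHom.toRingHom_eq_coe, RingHom.coe_coe, map_add,
      map_mul, aeval_C, aeval_X, algebraMap_eq_inl, DualNumber.eps, inl_mul_inr, smul_eq_mul,
      mul_one, inl_fst_add_inr_snd_eq]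
  have hwu (n : ℕ) : IsUnit (w n) := isUnit_iff_isUnit_fst.2 (hu n).isUnit
  have himage (n : ℕ) : φ (ND n).1 = w n * φ (ND n).2 ∧ IsUnit (φ (ND n).2) := by
    have := type2NumDen_fst_eq hw hwu n
    rwa [← hφx, ← hφC, ← hφC, ← map_type2NumDen] at this
  have hD : φ ((ND k).1 * (ND 0).2 - (ND 0).1 * (ND k).2) ≠ 0 := by
    rw [map_sub, map_mul, map_mul, (himage k).1, (himage 0).1, Ne,
      show ∀ u v d d' : K[ε], u * d * d' - v * d' * d = (u - v) * (d * d') by intros; ring,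
      ((himage k).2.mul (himage 0).2).mul_left_eq_zero]
    exact sub_ne_zero.2 hk
  obtain ⟨z, hz0, hz, hzk⟩ := exists_isType2Solution_ne_of_polynomial
    (fun n => ⟨fun h => ((hwu n).mul (himage n).2).ne_zero (by rw [← (himage n).1, h, map_zero]),
      fun h => (himage n).2.ne_zero (by rw [h, map_zero])⟩)
    fun h => hD (by rw [h, map_zero])
  exact hzk (by simpa using H z hz0 hz 0)

theorem AllSolutionsPeriodic.dualNumber {a b : K} {k : ℕ} (H : AllSolutionsPeriodic a b k)
    {w : ℕ → K[ε]} (hw : IsType2Solution (inl a) (inl b) w) (hu : ∀ n, (w n).fst ≠ 0)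
    (m : ℕ) : w (m + k) = w m := by
  simpa [add_comm k] using H.dualNumber_apply_zero (hw.shift m) fun n => hu (n + m)

theorem AllSolutionsPeriodic.tangent {a b : K} {k : ℕ} (H : AllSolutionsPeriodic a b k)
    {p e : ℕ → K} (hp : IsType2Solution a b p) (hp0 : ∀ n, p n ≠ 0) (he : IsType2Tangent a p e)
    (n : ℕ) : e (n + k) = e n := by
  simpa using congrArg snd (H.dualNumber (hp.dualNumber he) (fun n => by simpa using hp0 n) n)

theorem AllSolutionsPeriodic.prod_eq_prod {a b : K} {k : ℕ} (H : AllSolutionsPeriodic a b k)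
    {p : ℕ → K} (hp : IsType2Solution a b p) (hp0 : ∀ n, p n ≠ 0) :
    ∏ i ∈ Finset.range k, p i = ∏ i ∈ Finset.range k, (a - p (i + 3)) := by
  set e : Fin 3 → ℕ → K := fun j => tangentSeq a p (Pi.single j 1)
  have he (j : Fin 3) : IsType2Tangent a p (e j) := isType2Tangent_tangentSeq hp0 _
  have hrec (j : Fin 3) (n : ℕ) :
      p n * e j (n + 3) = (a - p (n + 3)) * e j n + 0 * e j (n + 1) + 1 * e j (n + 2) := by
    rw [he j n]
    ring
  have hW0 : casoratian (e 0) (e 1) (e 2) 0 = 1 := by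
    simp [casoratian, e, tangentSeq, Matrix.det_fin_three]
  have hper (j : Fin 3) := H.tangent hp hp0 (he j)
  have hW := prod_mul_casoratian (hrec 0) (hrec 1) (hrec 2) k
  rwa [← zero_add k, casoratian_add_of_periodic (hper 0) (hper 1) (hper 2), zero_add, hW0,
    mul_one, mul_one] at hW

end Deformation

open ComplexConjugate in
theorem Complex.add_add_eq_zero_of_norm_eq_one {x y z : ℂ} (hx : ‖x‖ = 1) (hy : ‖y‖ = 1)
    (hz : ‖z‖ = 1) (h : x * y + x * z + y * z = 0) : x + y + z = 0 := by
  have hx0 : x ≠ 0 := norm_ne_zero_iff.1 (by simp [hx])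
  have hy0 : y ≠ 0 := norm_ne_zero_iff.1 (by simp [hy])
  have hz0 : z ≠ 0 := norm_ne_zero_iff.1 (by simp [hz])
  have h' := congrArg conj h
  simp only [map_add, map_mul, map_zero, ← inv_eq_conj hx, ← inv_eq_conj hy, ← inv_eq_conj hz]
    at h'
  field_simp at h'
  linear_combination h'

theorem exists_cubic_root_pow_ne_one {c : ℂ} (hc : c ≠ 0) (d : ℂ) {k : ℕ} (hk : k ≠ 0) :
    ∃ r : ℂ, c * r ^ 3 = r ^ 2 + d ∧ r ^ k ≠ 1 := by
  set P : Cubic ℂ := ⟨c, -1, 0, -d⟩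
  have hPa : P.a ≠ 0 := hc
  obtain ⟨x, y, z, h3⟩ :=
    (Cubic.splits_iff_roots_eq_three (φ := RingHom.id ℂ) hPa).1 (IsAlgClosed.splits _)
  have hsum : -1 = c * -(x + y + z) := Cubic.b_eq_three_roots hPa h3
  have hpair : 0 = c * (x * y + x * z + y * z) := Cubic.c_eq_three_roots hPa h3
  have hroot (r : ℂ) (hr : r ∈ ({x, y, z} : Multiset ℂ)) : c * r ^ 3 = r ^ 2 + d := by
    rw [← h3, Cubic.map_roots, Polynomial.map_id, mem_roots (Cubic.ne_zero_of_a_ne_zero hPa)]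
      at hr
    simp only [IsRoot, Cubic.toPoly, P, eval_add, eval_mul, eval_C, eval_pow, eval_X] at hr
    linear_combination hr
  by_contra! hall
  have hnorm (r : ℂ) (hr : r ∈ ({x, y, z} : Multiset ℂ)) : ‖r‖ = 1 :=
    Complex.norm_eq_one_of_pow_eq_one (hall r (hroot r hr)) hk
  have := Complex.add_add_eq_zero_of_norm_eq_one (hnorm x (by simp)) (hnorm y (by simp))
    (hnorm z (by simp)) ((mul_eq_zero.1 hpair.symm).resolve_left hc)
  rw [this] at hsum
  norm_num at hsum

theorem not_allSolutionsPeriodic_of_fixedPoint {a b c : ℂ} (hc : c ≠ 0)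
    (hfix : c * c = a * c + c + b) {k : ℕ} (hk : k ≠ 0) : ¬ AllSolutionsPeriodic a b k := by
  intro H
  obtain ⟨r, hr, hrk⟩ := exists_cubic_root_pow_ne_one hc (a - c) hk
  have he : IsType2Tangent a (fun _ => c) (r ^ ·) := fun n => by
    simp only [pow_add]
    linear_combination r ^ n * hr
  exact hrk (by simpa using H.tangent (p := fun _ => c) (fun _ => hfix) (fun _ => hc) he 0)

theorem not_allSolutionsPeriodic_twelve_of_threeCycle {v : ZMod 3 → ℂ}
    (hv : ∀ i, v i * (v i + 1) = v (i + 2))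
    (hq : (v 0 * v 1 * v 2) ^ 2 - 2 * (v 0 * v 1 * v 2) + 3 = 0) :
    ¬ AllSolutionsPeriodic (-1 : ℂ) 0 12 := by
  intro H
  set q := v 0 * v 1 * v 2
  have hq0 : q ≠ 0 := fun h => by norm_num [h] at hq
  have hv0 (i : ZMod 3) : v i ≠ 0 := by
    simp only [q, mul_ne_zero_iff] at hq0
    fin_cases i
    exacts [hq0.1.1, hq0.1.2, hq0.2]
  set p : ℕ → ℂ := fun n => v n
  have hp : IsType2Solution (-1) 0 p := IsType2Solution.of_zmod fun i => by
    rw [show (3 : ZMod 3) = 0 from rfl, add_zero]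
    linear_combination hv i
  have hprod := H.prod_eq_prod hp fun n => hv0 n
  have hmod (n : ℕ) : p n = v (n % 3 : ℕ) := by simp [p]
  simp only [Finset.prod_range_succ, Finset.prod_range_zero, one_mul, hmod, zero_add,
    Nat.reduceAdd, Nat.reduceMod, Nat.cast_zero, Nat.cast_one, Nat.cast_ofNat] at hprod
  -- The product of `v i * (v i + 1) = v (i + 2)` over the cycle gives `∏ (1 + v i) = 1`,
  -- so `hprod` says `q ^ 4 = 1`.
  have hcycle : (1 + v 0) * (1 + v 1) * (1 + v 2) = 1 := by
    refine mul_left_cancel₀ hq0 ?_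
    have h0 := hv 0
    have h1 := hv 1
    have h2 := hv 2
    simp only [zero_add, show (1 + 2 : ZMod 3) = 0 from rfl, show (2 + 2 : ZMod 3) = 1 from rfl]
      at h0 h1 h2
    linear_combination (v 1 * (v 1 + 1) * v 2 * (v 2 + 1)) * h0 + v 2 * v 2 * (v 2 + 1) * h1
      + v 2 * v 0 * h2
  set P := (1 + v 0) * (1 + v 1) * (1 + v 2)
  have hq4 : q ^ 4 = 1 := by linear_combination hprod + (P ^ 3 + P ^ 2 + P + 1) * hcycle
  exact one_ne_zero (α := ℂ) <| by
    linear_combination (1 / 6 - (q - 3) * (q ^ 2 + 2 * q + 1) / 24) * hq + (q - 3) / 24 * hq4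

theorem exists_threeCycle_mul_add_one :
    ∃ v : ZMod 3 → ℂ, (∀ i, v i * (v i + 1) = v (i + 2)) ∧
      (v 0 * v 1 * v 2) ^ 2 - 2 * (v 0 * v 1 * v 2) + 3 = 0 := by
  -- `f` is `(g³(x) - x) / x²` for `g x = x * (x + 1)`, so its roots are the points of exact
  -- period 3 of `g`; the product over each of the two 3-cycles is `1 ± i√2`.
  set f : ℂ[X] := X ^ 6 + C 4 * X ^ 5 + C 8 * X ^ 4 + C 10 * X ^ 3 + C 9 * X ^ 2 + C 6 * X + C 3
  have hf : f.natDegree = 6 := by simp only [f]; compute_degree!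
  obtain ⟨x, hx⟩ := Complex.exists_root (natDegree_pos_iff_degree_pos.1 (by omega) : 0 < f.degree)
  simp only [f, IsRoot, eval_add, eval_mul, eval_pow, eval_C, eval_X] at hx
  refine ⟨![x, x ^ 4 + 2 * x ^ 3 + 2 * x ^ 2 + x, x ^ 2 + x], fun i => ?_, ?_⟩
  · fin_cases i
    · show x * (x + 1) = x ^ 2 + x
      ring
    · show (x ^ 4 + 2 * x ^ 3 + 2 * x ^ 2 + x) * (x ^ 4 + 2 * x ^ 3 + 2 * x ^ 2 + x + 1) = x
      linear_combination x ^ 2 * hx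
    · show (x ^ 2 + x) * (x ^ 2 + x + 1) = x ^ 4 + 2 * x ^ 3 + 2 * x ^ 2 + x
      ring
  · show (x * (x ^ 4 + 2 * x ^ 3 + 2 * x ^ 2 + x) * (x ^ 2 + x)) ^ 2
      - 2 * (x * (x ^ 4 + 2 * x ^ 3 + 2 * x ^ 2 + x) * (x ^ 2 + x)) + 3 = 0
    linear_combination (1 - 2 * x + x ^ 2 - x ^ 4 + x ^ 6 + 2 * x ^ 7 + x ^ 8) * hx

theorem exists_fixedPoint {a b : ℂ} (h : ¬(b = 0 ∧ a = -1)) :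
    ∃ c : ℂ, c ≠ 0 ∧ c * c = a * c + c + b := by
  by_cases hb : b = 0
  · subst hb
    exact ⟨a + 1, fun h' => h ⟨rfl, by linear_combination h'⟩, by ring⟩
  obtain ⟨c, hc⟩ := exists_quadratic_eq_zero (b := -(a + 1)) (c := -b) one_ne_zero
    (IsAlgClosed.exists_eq_mul_self _)
  refine ⟨c, fun h0 => hb (by simpa [h0] using hc), by linear_combination hc⟩

theorem no_type_two_period_twelve :
    ¬ ∃ a₀ a₃ : ℂ, ∀ z : ℕ → ℂ, (∀ n, z n ≠ 0) →
      (∀ n, z (n + 3) = (a₃ * z n + z (n + 2) + a₀) / z n) →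
      ∀ n, z (n + 12) = z n := by
  rintro ⟨b, a, H⟩
  have hper : AllSolutionsPeriodic a b 12 := fun z hz hsol =>
    H z hz fun n => eq_div_of_mul_eq (hz n) (hsol n)
  by_cases hspecial : b = 0 ∧ a = -1
  · obtain ⟨rfl, rfl⟩ := hspecial
    obtain ⟨v, hv, hq⟩ := exists_threeCycle_mul_add_one
    exact not_allSolutionsPeriodic_twelve_of_threeCycle hv hq hper
  · obtain ⟨c, hc, hfix⟩ := exists_fixedPoint hspecial
    exact not_allSolutionsPeriodic_of_fixedPoint hc hfix (by norm_num) hper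
end

section
/- Let z : ℕ → ℂ be a sequence with z n ≠ 0 for all n, satisfying the third-order recursion z_{n+3} = (1 + z_{n+1} + z_{n+2})/z_n for all n. Then z is periodic with period 8, i.e. z_{n+8} = z_n for all n. -/
theorem third_order_plus_period_eight (z : ℕ → ℂ) (hz : ∀ n, z n ≠ 0)
    (hrec : ∀ n, z (n + 3) = (1 + z (n + 1) + z (n + 2)) / z n) :
    ∀ n, z (n + 8) = z n := by
  intro n
  have h0 := hz n
  have h1 := hz (n+1)
  have h2 := hz (n+2)
  have h3 := hz (n+3)
  have h4 := hz (n+4)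
  have h5 := hz (n+5)
  have h6 := hz (n+6)
  have h7 := hz (n+7)
  have f3 : z (n+3) * z n = 1 + z (n+1) + z (n+2) := by
    rw [hrec n]; exact div_mul_cancel₀ _ h0
  have f4 : z (n+4) * z (n+1) = 1 + z (n+2) + z (n+3) := by
    have h : z (n+4) = (1 + z (n+2) + z (n+3)) / z (n+1) := hrec (n+1)
    rw [h]; exact div_mul_cancel₀ _ h1
  have f5 : z (n+5) * z (n+2) = 1 + z (n+3) + z (n+4) := by
    have h : z (n+5) = (1 + z (n+3) + z (n+4)) / z (n+2) := hrec (n+2)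
    rw [h]; exact div_mul_cancel₀ _ h2
  have f6 : z (n+6) * z (n+3) = 1 + z (n+4) + z (n+5) := by
    have h : z (n+6) = (1 + z (n+4) + z (n+5)) / z (n+3) := hrec (n+3)
    rw [h]; exact div_mul_cancel₀ _ h3
  have f7 : z (n+7) * z (n+4) = 1 + z (n+5) + z (n+6) := by
    have h : z (n+7) = (1 + z (n+5) + z (n+6)) / z (n+4) := hrec (n+4)
    rw [h]; exact div_mul_cancel₀ _ h4
  have f8 : z (n+8) * z (n+5) = 1 + z (n+6) + z (n+7) := by
    have h : z (n+8) = (1 + z (n+6) + z (n+7)) / z (n+5) := hrec (n+5)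
    rw [h]; exact div_mul_cancel₀ _ h5
  set a := z n
  set b := z (n+1)
  set c := z (n+2)
  -- closed forms
  have E4 : z (n+4) * a * b = 1 + a + b + c + a * c := by
    linear_combination a * f4 + f3
  have E5 : z (n+5) * a * b * c = (1 + a + b) * (1 + b + c) := by
    linear_combination a * b * f5 + b * f3 + E4
  have hbc : (1 + b + c : ℂ) ≠ 0 := by
    rw [← f3]; exact mul_ne_zero h3 h0
  have E6 : z (n+6) * b * c = 1 + a + b + c + a * c := by
    have key : (z (n+6) * b * c) * (1 + b + c) =
        (1 + a + b + c + a * c) * (1 + b + c) := by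
      linear_combination a * b * c * f6 - b * c * z (n+6) * f3 + c * E4 + E5
    exact mul_right_cancel₀ hbc key
  have hP : (1 + a + b + c + a * c : ℂ) ≠ 0 := by
    rw [← E4]; exact mul_ne_zero (mul_ne_zero h4 h0) h1
  have E7 : z (n+7) * c = 1 + a + b := by
    have key : (z (n+7) * c) * (1 + a + b + c + a * c) =
        (1 + a + b) * (1 + a + b + c + a * c) := by
      linear_combination a * b * c * f7 - c * z (n+7) * E4 + E5 + a * E6
    exact mul_right_cancel₀ hP key
  have hab : (1 + a + b : ℂ) ≠ 0 := by
    rw [← E7]; exact mul_ne_zero h7 h2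
  have key : z (n+8) * ((1 + a + b) * (1 + b + c)) = a * ((1 + a + b) * (1 + b + c)) := by
    linear_combination a * b * c * f8 - z (n+8) * E5 + a * E6 + a * b * E7
  exact mul_right_cancel₀ (mul_ne_zero hab hbc) key
end

section
/- Let z : ℕ → ℂ be a sequence with z n ≠ 0 for all n, satisfying the third-order recursion z_{n+3} = (-1 + z_{n+1} - z_{n+2})/z_n for all n. Then z is periodic with period 8, i.e. z_{n+8} = z_n for all n. -/
theorem third_order_minus_period_eight (z : ℕ → ℂ) (hz : ∀ n, z n ≠ 0)
    (hrec : ∀ n, z (n + 3) = (-1 + z (n + 1) - z (n + 2)) / z n) :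
    ∀ n, z (n + 8) = z n := by
  have e : ∀ k, z k * z (k + 3) = -1 + z (k + 1) - z (k + 2) := by
    intro k
    rw [hrec k, mul_div_cancel₀ _ (hz k)]
  intro n
  have e0 : z n * z (n + 3) = -1 + z (n + 1) - z (n + 2) := e n
  have e1 : z (n + 1) * z (n + 4) = -1 + z (n + 2) - z (n + 3) := e (n + 1)
  have e2 : z (n + 2) * z (n + 5) = -1 + z (n + 3) - z (n + 4) := e (n + 2)
  have e3 : z (n + 3) * z (n + 6) = -1 + z (n + 4) - z (n + 5) := e (n + 3)
  have e4 : z (n + 4) * z (n + 7) = -1 + z (n + 5) - z (n + 6) := e (n + 4)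
  have e5 : z (n + 5) * z (n + 8) = -1 + z (n + 6) - z (n + 7) := e (n + 5)
  have p4 : z n * z (n + 1) * z (n + 4)
      = z n * z (n + 2) - z n - z (n + 1) + z (n + 2) + 1 := by
    linear_combination z n * e1 - e0
  have p5 : z n * z (n + 1) * z (n + 2) * z (n + 5)
      = -(z n * z (n + 1)) + z (n + 1) ^ 2 - z (n + 1) * z (n + 2) + z n
        - z n * z (n + 2) - 1 - z (n + 2) := by
    linear_combination z n * z (n + 1) * e2 + z (n + 1) * e0 - p4
  have q6 : z n * z (n + 3) *
      (z (n + 1) * z (n + 2) * z (n + 6) + z n * z (n + 2) - z n + z (n + 1)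
        + z (n + 2) + 1) = 0 := by
    linear_combination z n * z (n + 1) * z (n + 2) * e3 + z (n + 2) * p4 - p5
      + (z n * z (n + 2) - z n + z (n + 1) + z (n + 2) + 1) * e0
  have p6 : z (n + 1) * z (n + 2) * z (n + 6) + z n * z (n + 2) - z n + z (n + 1)
      + z (n + 2) + 1 = 0 :=
    (mul_eq_zero.mp q6).resolve_left (mul_ne_zero (hz n) (hz (n + 3)))
  have q7 : z n * z (n + 1) * z (n + 4) *
      (z (n + 2) * z (n + 7) - z n + z (n + 1) + 1) = 0 := by
    linear_combination z n * z (n + 1) * z (n + 2) * e4 - z n * p6 + p5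
      + (1 + z (n + 1) - z n) * p4
  have p7 : z (n + 2) * z (n + 7) - z n + z (n + 1) + 1 = 0 :=
    (mul_eq_zero.mp q7).resolve_left
      (mul_ne_zero (mul_ne_zero (hz n) (hz (n + 1))) (hz (n + 4)))
  have q8 : z n * z (n + 1) * z (n + 2) * z (n + 5) * (z (n + 8) - z n) = 0 := by
    linear_combination z n * z (n + 1) * z (n + 2) * e5 - z n * z (n + 1) * p7
      + z n * p6 - z n * p5
  have := (mul_eq_zero.mp q8).resolve_left
    (mul_ne_zero (mul_ne_zero (mul_ne_zero (hz n) (hz (n + 1))) (hz (n + 2)))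
      (hz (n + 5)))
  linear_combination this
end
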